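/- arXiv:1312.7569 — 2 statements merged into one kernel-verified Lean document; each statement's English description precedes it below -/
import Mathlib

section
/- Let p ≥ 3 be a prime and let p' be the smallest prime greater than p. Then N_{p'}(2) = (p' - 2) · N_p(2); that is, the number of gaps equal to 2 in the cycle of gaps 𝒢(p'#) is (p' - 2) times the number of gaps equal to 2 in 𝒢(p#). -/
/-!
For an even modulus `P`, a gap `2` starts at a totative `r` exactly when `r + 2` is also a
totative, so `N_p(2)` counts the residues `x` mod `p#` with `x` and `x + 2` both units. By the
Chinese remainder theorem this count is multiplicative in coprime moduli, and modulo an odd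
prime `q` exactly the `q - 2` residues other than `0` and `-2` qualify. Since `p'# = p' · p#`,
the count gets multiplied by `p' - 2`.
-/

open Finset

/-- `b` is the next totative of `P` after `a`: `a < b`, `b` is coprime to `P`,
and no integer strictly between `a` and `b` is coprime to `P`. -/
def IsNextTot (P a b : ℕ) : Prop :=
  a < b ∧ Nat.Coprime b P ∧ ∀ x, a < x → x < b → ¬ Nat.Coprime x P

/-- Starting at `r`, the successive totatives of `P` after `r` occur at the
successive partial sums of the list of gaps `c`. -/
def MatchesGaps (P : ℕ) : ℕ → List ℕ → Prop
  | _, [] => True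
  | r, c :: cs => IsNextTot P r (r + c) ∧ MatchesGaps P (r + c) cs

open scoped Classical in
/-- `Ncount p s` : the number of (cyclic) occurrences of the constellation `s`
in the cycle of gaps `𝒢(p#)`.  Since the pattern of coprimality to `p#` is
periodic with period `p#`, this is the number of totatives `r ∈ [1, p#]` of `p#`
at which the gap pattern `s` begins. -/
noncomputable def Ncount (p : ℕ) (s : List ℕ) : ℕ :=
  ((Finset.Icc 1 (primorial p)).filter
    (fun r => Nat.Coprime r (primorial p) ∧ MatchesGaps (primorial p) r s)).card

open scoped Classical in
/-- `nCount p g j` : the number of (cyclic) occurrences in `𝒢(p#)` of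
constellations of length `j` with sum `g` (the driving terms of length `j`
for the gap `g`). -/
noncomputable def nCount (p g j : ℕ) : ℕ :=
  ((Finset.Icc 1 (primorial p)).filter
    (fun r => Nat.Coprime r (primorial p) ∧
      ∃ c : List ℕ, c.length = j ∧ c.sum = g ∧ MatchesGaps (primorial p) r c)).card

noncomputable def unitPairCount (R : Type*) [Semiring R] (k : ℕ) : ℕ :=
  Nat.card {x : R // IsUnit x ∧ IsUnit (x + k)}

section unitPairCount

variable {R S : Type*} [Semiring R] [Semiring S]

lemma unitPairCount_congr (e : R ≃+* S) (k : ℕ) : unitPairCount R k = unitPairCount S k :=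
  Nat.card_congr <| e.toEquiv.subtypeEquiv fun x => by
    simp only [RingEquiv.toEquiv_eq_coe, EquivLike.coe_coe, ← map_natCast e k, ← map_add,
      MulEquiv.isUnit_map]

lemma unitPairCount_prod (k : ℕ) :
    unitPairCount (R × S) k = unitPairCount R k * unitPairCount S k := by
  rw [unitPairCount, unitPairCount, unitPairCount, ← Nat.card_prod]
  refine Nat.card_congr <| (Equiv.subtypeEquivRight fun z => ?_).trans Equiv.subtypeProdEquivProd
  simp only [Prod.isUnit_iff, Prod.fst_add, Prod.snd_add, Prod.fst_natCast, Prod.snd_natCast]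
  tauto

end unitPairCount

lemma unitPairCount_zmod_mul {M N : ℕ} (h : M.Coprime N) (k : ℕ) :
    unitPairCount (ZMod (M * N)) k = unitPairCount (ZMod M) k * unitPairCount (ZMod N) k := by
  rw [unitPairCount_congr (ZMod.chineseRemainder h), unitPairCount_prod]

lemma unitPairCount_zmod_prime {q k : ℕ} (hq : q.Prime) (hk : ¬ q ∣ k) :
    unitPairCount (ZMod q) k = q - 2 := by
  have : Fact q.Prime := ⟨hq⟩
  have hk0 : (k : ZMod q) ≠ 0 := by rwa [Ne, ZMod.natCast_eq_zero_iff]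
  have hunits : ({x : ZMod q | IsUnit x ∧ IsUnit (x + k)} : Finset _) = {0, -(k : ZMod q)}ᶜ := by
    ext x
    simp [isUnit_iff_ne_zero, eq_neg_iff_add_eq_zero]
  rw [unitPairCount, Nat.card_eq_fintype_card, Fintype.card_subtype, hunits, card_compl,
    ZMod.card, card_pair (by simpa [eq_comm] using hk0)]

lemma card_filter_Icc_eq_card_zmod (N : ℕ) [NeZero N] (Q : ZMod N → Prop) [DecidablePred Q] :
    #{r ∈ Icc 1 N | Q ((r : ℕ) : ZMod N)} = Nat.card {x : ZMod N // Q x} := by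
  have hper : Function.Periodic (fun r : ℕ => Q r) N := fun r => by simp
  have hIcc : Icc 1 N = Ico 1 (1 + N) := by ext; simp only [mem_Icc, mem_Ico]; omega
  rw [hIcc, Nat.filter_Ico_card_eq_of_periodic _ _ _ hper, Nat.count_eq_card_filter_range,
    Nat.card_eq_fintype_card, Fintype.card_subtype]
  refine card_nbij' (fun r => (r : ZMod N)) ZMod.val ?_ ?_ ?_ ?_ <;> intro r hr
  · simpa using (mem_filter.mp hr).2
  · simpa [ZMod.val_lt] using hr
  · simpa using Nat.mod_eq_of_lt (mem_range.mp (mem_filter.mp hr).1)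
  · simp

lemma primorial_eq_mul_of_next_prime {p p' : ℕ} (hp' : p'.Prime) (hlt : p < p')
    (hmin : ∀ q : ℕ, q.Prime → p < q → p' ≤ q) : primorial p' = p' * primorial p := by
  obtain ⟨n, rfl⟩ : ∃ n, p' = p + n := ⟨p' - p, by omega⟩
  have hprimes_between : {q ∈ Ico (p + 1) (p + n + 1) | q.Prime} = {p + n} := by
    ext q
    simp only [mem_filter, mem_Ico, mem_singleton]
    constructor
    · rintro ⟨⟨hpq, hqn⟩, hq⟩
      have := hmin q hq (by omega)
      omega
    · rintro rfl
      exact ⟨⟨by omega, by omega⟩, hp'⟩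
  rw [primorial_add, hprimes_between, prod_singleton, mul_comm]

lemma coprime_primorial_of_lt {p q : ℕ} (hq : q.Prime) (hlt : p < q) :
    q.Coprime (primorial p) :=
  Nat.Coprime.prod_right fun r hr => by
    rw [mem_filter, mem_range] at hr
    exact (Nat.coprime_primes hq hr.2).mpr (by omega)

instance (n : ℕ) : NeZero (primorial n) := ⟨primorial_ne_zero n⟩

lemma two_dvd_primorial {p : ℕ} (hp : 2 ≤ p) : 2 ∣ primorial p :=
  primorial_two ▸ primorial_dvd_primorial hp

lemma matchesGaps_two_iff {P r : ℕ} (hP : 2 ∣ P) (hr : r.Coprime P) :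
    MatchesGaps P r [2] ↔ (r + 2).Coprime P := by
  have hr_odd : ¬ 2 ∣ r := fun h2r =>
    Nat.not_coprime_of_dvd_of_dvd one_lt_two h2r hP hr
  simp only [MatchesGaps, IsNextTot, and_true]
  refine ⟨fun h => h.2.1, fun h => ⟨by omega, h, fun x hrx hxr => ?_⟩⟩
  obtain rfl : x = r + 1 := by omega
  exact Nat.not_coprime_of_dvd_of_dvd one_lt_two (by omega) hP

lemma Ncount_two_eq_unitPairCount {p : ℕ} (hp : 2 ≤ p) :
    Ncount p [2] = unitPairCount (ZMod (primorial p)) 2 := by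
  classical
  rw [Ncount, unitPairCount, ← card_filter_Icc_eq_card_zmod]
  congr 1
  refine filter_congr fun r _ => ?_
  rw [← Nat.cast_add, ZMod.isUnit_iff_coprime, ZMod.isUnit_iff_coprime]
  exact and_congr_right (matchesGaps_two_iff (two_dvd_primorial hp))

theorem gap_two_recurrence_general (p p' : ℕ) (hp : p.Prime)
    (hp' : p'.Prime) (hlt : p < p') (hmin : ∀ q : ℕ, q.Prime → p < q → p' ≤ q) :
    Ncount p' [2] = (p' - 2) * Ncount p [2] := by
  have hp'_ndvd : ¬ p' ∣ 2 := Nat.not_dvd_of_pos_of_lt two_pos (hp.two_le.trans_lt hlt)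
  rw [Ncount_two_eq_unitPairCount hp'.two_le, Ncount_two_eq_unitPairCount hp.two_le,
    primorial_eq_mul_of_next_prime hp' hlt hmin,
    unitPairCount_zmod_mul (coprime_primorial_of_lt hp' hlt),
    unitPairCount_zmod_prime hp' hp'_ndvd]

theorem gap_two_recurrence (p p' : ℕ) (hp : p.Prime) (h3 : 3 ≤ p)
    (hp' : p'.Prime) (hlt : p < p') (hmin : ∀ q : ℕ, q.Prime → p < q → p' ≤ q) :
    Ncount p' [2] = (p' - 2) * Ncount p [2] :=
  gap_two_recurrence_general p p' hp hp' hlt hmin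
end

section
/- Let g be a positive even integer and let p_0 be a prime such that the smallest prime q greater than p_0 satisfies q > g/2 + 1 (so that every constellation of sum g has length j with j < q - 1, and g < 2q). Then the ratio of the number of gaps equal to g in 𝒢(p#) to the number of gaps equal to 2 in 𝒢(p#) converges, as p → ∞ through the primes, to the normalized total count of driving terms at p_0: lim_{p→∞} n_{g,1}(p) / n_{2,1}(p) = (Σ_{j=1}^{⌊g/2⌋} n_{g,j}(p_0)) / n_{2,1}(p_0). -/
/-!
Passing from a prime `p'` to the next prime `p` multiplies `N = p'#` by `p`, and a residue `r'`
modulo `N` lifts to the residues `r' + t * N` (`t < p`) modulo `p * N`. A constellation of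
sum `g < 2p` with `K` interior totatives has `K + 2` odd points spanning less than `2p`, so they
are pairwise distinct modulo `p`, and each value of `t` makes at most one of them divisible by `p`.
The constellation therefore survives unchanged for `p - K - 2` values of `t`, loses one interior
point for `K` values, and is destroyed otherwise:
`n_{g,j}(p) = (p - j - 1) n_{g,j}(p') + j n_{g,j+1}(p')`.
Summing over `j`, both `S = ∑ n_{g,j}` and `n_{2,1}` get multiplied by `p - 2`, while
`Y = ∑ (j - 1) n_{g,j}` gets multiplied by `p - 3`. As `S - Y ≤ n_{g,1} ≤ S`, the ratio
`n_{g,1} / n_{2,1}` is within `Y(p₀) / n_{2,1}(p₀) * ∏ (1 - 1 / (k - 2))` of `S(p₀) / n_{2,1}(p₀)`,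
and the product over the primes `k ∈ (p₀, p]` tends to `0` because `∑ 1 / k` diverges.
-/

open Finset

def coprimeCountIoo (N a b : ℕ) : ℕ := #{x ∈ Ioo a b | x.Coprime N}

namespace IsNextTot

variable {N a b : ℕ}

lemma coprimeCountIoo_self (h : IsNextTot N a b) : coprimeCountIoo N a b = 0 :=
  card_eq_zero.mpr <| filter_eq_empty_iff.mpr fun x hx ↦
    h.2.2 x (mem_Ioo.mp hx).1 (mem_Ioo.mp hx).2

lemma coprimeCountIoo_of_lt (h : IsNextTot N a b) {c : ℕ} (hbc : b < c) :
    coprimeCountIoo N a c = coprimeCountIoo N b c + 1 := by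
  rw [coprimeCountIoo, coprimeCountIoo, ← card_insert_of_notMem (a := b) (by simp)]
  congr 1
  ext x
  simp only [mem_filter, mem_Ioo, mem_insert]
  constructor
  · rintro ⟨⟨hax, hxc⟩, hx⟩
    rcases lt_trichotomy x b with hxb | rfl | hbx
    · exact absurd hx (h.2.2 x hax hxb)
    · exact Or.inl rfl
    · exact Or.inr ⟨⟨hbx, hxc⟩, hx⟩
  · rintro (rfl | ⟨⟨hbx, hxc⟩, hx⟩)
    · exact ⟨⟨h.1, hbc⟩, h.2.1⟩
    · exact ⟨⟨h.1.trans hbx, hxc⟩, hx⟩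

end IsNextTot

lemma exists_isNextTot {N a b : ℕ} (hab : a < b) (hb : b.Coprime N) :
    ∃ s ≤ b, IsNextTot N a s := by
  classical
  have hex : ∃ s, a < s ∧ s.Coprime N := ⟨b, hab, hb⟩
  obtain ⟨has, hs⟩ := Nat.find_spec hex
  exact ⟨Nat.find hex, Nat.find_min' hex ⟨hab, hb⟩, has, hs,
    fun x hax hxs hx ↦ Nat.find_min hex hxs ⟨hax, hx⟩⟩

theorem MatchesGaps.coprime_and_coprimeCountIoo {N : ℕ} :
    ∀ {r : ℕ} {c : List ℕ}, c ≠ [] → MatchesGaps N r c →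
      (r + c.sum).Coprime N ∧ coprimeCountIoo N r (r + c.sum) + 1 = c.length
  | _, [], hc, _ => absurd rfl hc
  | _, [_], _, ⟨h, _⟩ => by simpa using ⟨h.2.1, h.coprimeCountIoo_self⟩
  | _, _ :: c₁ :: cs, _, ⟨h, hm⟩ => by
    obtain ⟨hcop, hcount⟩ := coprime_and_coprimeCountIoo (List.cons_ne_nil c₁ cs) hm
    have hc₁ : 0 < c₁ := by have := hm.1.1; omega
    simp only [List.sum_cons, List.length_cons, ← add_assoc] at hcop hcount ⊢
    rw [h.coprimeCountIoo_of_lt (by omega)]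
    exact ⟨hcop, by omega⟩

theorem exists_matchesGaps {N : ℕ} (g : ℕ) (hg : 0 < g) (r : ℕ) (hrg : (r + g).Coprime N) :
    ∃ c : List ℕ, c.length = coprimeCountIoo N r (r + g) + 1 ∧ c.sum = g ∧ MatchesGaps N r c := by
  induction g using Nat.strong_induction_on generalizing r with
  | _ g ih =>
    obtain ⟨s, hs, hnext⟩ := exists_isNextTot (by omega : r < r + g) hrg
    rcases hs.eq_or_lt with rfl | hs
    · exact ⟨[g], by simp [hnext.coprimeCountIoo_self], by simp, hnext, trivial⟩
    · have hr : r < s := hnext.1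
      obtain ⟨c, hlen, hsum, hm⟩ := ih (r + g - s) (by omega) (by omega) s (by
        rwa [show s + (r + g - s) = r + g by omega])
      rw [show s + (r + g - s) = r + g by omega] at hlen
      refine ⟨(s - r) :: c, ?_, by simp [hsum]; omega, ?_⟩
      · simp [hlen, hnext.coprimeCountIoo_of_lt hs]
      · rw [MatchesGaps, show r + (s - r) = s by omega]
        exact ⟨hnext, hm⟩

theorem exists_matchesGaps_iff {N g : ℕ} (hg : 0 < g) (r j : ℕ) :
    (∃ c : List ℕ, c.length = j ∧ c.sum = g ∧ MatchesGaps N r c) ↔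
      (r + g).Coprime N ∧ coprimeCountIoo N r (r + g) + 1 = j := by
  constructor
  · rintro ⟨c, rfl, rfl, hm⟩
    exact hm.coprime_and_coprimeCountIoo (by rintro rfl; simp at hg)
  · rintro ⟨hrg, rfl⟩
    exact exists_matchesGaps g hg r hrg

def IsDrivingTerm (N g j r : ℕ) : Prop :=
  r.Coprime N ∧ (r + g).Coprime N ∧ coprimeCountIoo N r (r + g) + 1 = j

instance (N g j : ℕ) : DecidablePred (IsDrivingTerm N g j) := fun _ ↦ by
  unfold IsDrivingTerm; infer_instance

def drivingTermCount (N g j : ℕ) : ℕ := #{r ∈ Icc 1 N | IsDrivingTerm N g j r}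

theorem nCount_eq_drivingTermCount (p : ℕ) {g : ℕ} (hg : 0 < g) (j : ℕ) :
    nCount p g j = drivingTermCount (primorial p) g j := by
  unfold nCount drivingTermCount IsDrivingTerm
  simp only [exists_matchesGaps_iff hg]

lemma odd_of_coprime_of_two_dvd {N x : ℕ} (hN : 2 ∣ N) (hx : x.Coprime N) : Odd x :=
  Nat.Coprime.odd_of_right (hx.coprime_dvd_right hN)

lemma coprimeCountIoo_le {N r g : ℕ} (hN : 2 ∣ N) (hg : 0 < g) (hr : r.Coprime N)
    (hrg : (r + g).Coprime N) :
    coprimeCountIoo N r (r + g) + 1 ≤ g / 2 := by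
  obtain ⟨a, ha⟩ := odd_of_coprime_of_two_dvd hN hr
  obtain ⟨b, hb⟩ := odd_of_coprime_of_two_dvd hN hrg
  have hsub : {x ∈ Ioo r (r + g) | x.Coprime N} ⊆ (Ioo 0 (g / 2)).image (fun i ↦ r + 2 * i) := by
    intro x hx
    simp only [mem_filter, mem_Ioo] at hx
    obtain ⟨c, hc⟩ := odd_of_coprime_of_two_dvd hN hx.2
    exact mem_image.mpr ⟨c - a, mem_Ioo.mpr ⟨by omega, by omega⟩, by omega⟩
  have := (card_le_card hsub).trans card_image_le
  simp only [Nat.card_Ioo] at this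
  unfold coprimeCountIoo
  omega

theorem drivingTermCount_eq_zero {N g j : ℕ} (hN : 2 ∣ N) (hg : 0 < g) (hj : g / 2 < j) :
    drivingTermCount N g j = 0 :=
  card_eq_zero.mpr <| filter_eq_empty_iff.mpr fun _ _ ⟨hr, hrg, hcount⟩ ↦
    absurd (coprimeCountIoo_le hN hg hr hrg) (by omega)

theorem drivingTermCount_two_one_pos {N : ℕ} (hN : 2 ≤ N) : 0 < drivingTermCount N 2 1 := by
  refine card_pos.mpr ⟨N - 1, mem_filter.mpr ⟨mem_Icc.mpr ⟨by omega, by omega⟩, ?_, ?_, ?_⟩⟩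
  · rw [Nat.coprime_self_sub_left (by omega)]
    exact Nat.coprime_one_left N
  · rw [show N - 1 + 2 = N + 1 by omega, Nat.coprime_self_add_left]
    exact Nat.coprime_one_left N
  · have hIoo : Ioo (N - 1) (N - 1 + 2) = {N} := by ext; simp; omega
    rw [coprimeCountIoo, hIoo, filter_singleton, if_neg (by rw [Nat.coprime_self]; omega)]
    rfl

theorem card_filter_Icc_mul_eq_sum (P : ℕ → Prop) [DecidablePred P] (q N : ℕ) :
    #{r ∈ Icc 1 (q * N) | P r} = ∑ r ∈ Icc 1 N, #{t ∈ range q | P (r + t * N)} := by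
  have hrows : #{r ∈ Icc 1 (q * N) | P r} = ∑ t ∈ range q, #{r ∈ Icc 1 N | P (r + t * N)} := by
    simp only [show ∀ n : ℕ, Icc 1 n = Ioc 0 n from Icc_add_one_left_eq_Ioc 0]
    induction q with
    | zero => simp
    | succ q ih =>
      rw [sum_range_succ, ← ih, add_one_mul,
        ← Ioc_union_Ioc_eq_Ioc (b := q * N) (by omega) (by omega), filter_union,
        card_union_of_disjoint (disjoint_filter_filter (Ioc_disjoint_Ioc_of_le le_rfl)),
        show Ioc (q * N) (q * N + N) = (Ioc 0 N).map (addRightEmbedding (q * N)) by simp [add_comm],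
        filter_map, card_map]
      rfl
  rw [hrows]
  simp only [card_filter]
  exact sum_comm

section Hits

variable {α β : Type*} [DecidableEq α] [DecidableEq β] {τ : α → β}

lemma card_filter_ne_eq {I : Finset α} (hτ : Set.InjOn τ I) (t : β) :
    #{x ∈ I | τ x ≠ t} = if t ∈ I.image τ then #I - 1 else #I := by
  split_ifs with ht
  · obtain ⟨x₀, hx₀, rfl⟩ := mem_image.mp ht
    rw [← card_erase_of_mem hx₀]
    congr 1
    ext x
    simp only [mem_filter, mem_erase]
    exact ⟨fun ⟨hx, hne⟩ ↦ ⟨fun h ↦ hne (h ▸ rfl), hx⟩,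
      fun ⟨hne, hx⟩ ↦ ⟨hx, fun h ↦ hne (hτ hx hx₀ h)⟩⟩
  · exact congrArg card (filter_true_of_mem fun x hx h ↦ ht (mem_image.mpr ⟨x, hx, h⟩))

theorem card_filter_notMem_image_card_filter_ne {T : Finset β} {E I : Finset α}
    (hEI : Disjoint E I) (hτ : Set.InjOn τ ↑(E ∪ I)) (hT : ∀ x ∈ E ∪ I, τ x ∈ T) (k : ℕ) :
    #{t ∈ T | t ∉ E.image τ ∧ #{x ∈ I | τ x ≠ t} = k} =
      (if k = #I then #T - (#E + #I) else 0) + (if k + 1 = #I then #I else 0) := by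
  have hI : Set.InjOn τ I := hτ.mono (by simp)
  have hsub : E.image τ ∪ I.image τ ⊆ T := by
    rw [← image_union]
    exact image_subset_iff.mpr hT
  have hdisj : Disjoint (E.image τ) (I.image τ) := by
    rw [disjoint_left]
    rintro _ hE hI'
    obtain ⟨x, hx, rfl⟩ := mem_image.mp hE
    obtain ⟨y, hy, hyx⟩ := mem_image.mp hI'
    have hyx : y = x :=
      hτ (mem_coe.mpr (mem_union_right E hy)) (mem_coe.mpr (mem_union_left I hx)) hyx
    exact disjoint_left.mp hEI hx (hyx ▸ hy)
  have hsplit : {t ∈ T | t ∉ E.image τ ∧ #{x ∈ I | τ x ≠ t} = k} =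
      {t ∈ I.image τ | #I - 1 = k} ∪ {t ∈ T \ (E.image τ ∪ I.image τ) | #I = k} := by
    ext t
    by_cases htI : t ∈ I.image τ
    · simp only [mem_filter, mem_union, mem_sdiff, card_filter_ne_eq hI, htI,
        disjoint_right.mp hdisj htI, hsub (mem_union_right _ htI), if_true, not_false_eq_true,
        true_and, or_true, not_true_eq_false, and_false, false_and, or_false]
    · simp only [mem_filter, mem_union, mem_sdiff, card_filter_ne_eq hI, htI, if_false,
        false_and, false_or, or_false]
      tauto
  have hcardI : #(I.image τ) = #I := card_image_of_injOn hI
  have hcardR : #(T \ (E.image τ ∪ I.image τ)) = #T - (#E + #I) := by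
    rw [card_sdiff_of_subset hsub, card_union_of_disjoint hdisj, hcardI,
      card_image_of_injOn (hτ.mono (by simp))]
  rw [hsplit, card_union_of_disjoint
      (disjoint_filter_filter (disjoint_sdiff.mono_left subset_union_right)),
    filter_const, filter_const]
  split_ifs <;> simp only [card_empty, hcardI, hcardR] <;> omega

end Hits

theorem Nat.ModEq.eq_of_le_of_lt_add {m a x y : ℕ} (h : x ≡ y [MOD m]) (hx : a ≤ x) (hy : a ≤ y)
    (hx' : x < a + m) (hy' : y < a + m) : x = y := by
  obtain ⟨x, rfl⟩ := Nat.exists_eq_add_of_le hx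
  obtain ⟨y, rfl⟩ := Nat.exists_eq_add_of_le hy
  rw [(h.add_left_cancel' a).eq_of_lt_of_lt (by omega) (by omega)]

lemma Nat.coprime_prime_mul_iff {q N x : ℕ} (hq : q.Prime) :
    x.Coprime (q * N) ↔ ¬ q ∣ x ∧ x.Coprime N := by
  rw [Nat.coprime_mul_iff_right, Nat.coprime_comm.trans hq.coprime_iff_not_dvd]

/-- For `q` prime not dividing `N`, the unique `t < q` with `q ∣ x + t * N`. -/
def hitTime (q N x : ℕ) : ℕ := (-(x : ZMod q) * (N : ZMod q)⁻¹).val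

section HitTime

variable {q N : ℕ} [Fact q.Prime]

lemma hitTime_lt (x : ℕ) : hitTime q N x < q := ZMod.val_lt _

lemma dvd_add_mul_iff_eq_hitTime (hqN : ¬ q ∣ N) (x : ℕ) {t : ℕ} (ht : t < q) :
    q ∣ x + t * N ↔ t = hitTime q N x := by
  have hN : (N : ZMod q) ≠ 0 := by rwa [Ne, ZMod.natCast_eq_zero_iff]
  have hcast : t = hitTime q N x ↔ (t : ZMod q) = -(x : ZMod q) * (N : ZMod q)⁻¹ :=
    ⟨fun h ↦ h ▸ ZMod.natCast_zmod_val _, fun h ↦ by rw [hitTime, ← h, ZMod.val_cast_of_lt ht]⟩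
  rw [← ZMod.natCast_eq_zero_iff, Nat.cast_add, Nat.cast_mul, hcast, eq_mul_inv_iff_mul_eq₀ hN]
  constructor <;> intro h <;> linear_combination h

lemma modEq_of_hitTime_eq (hqN : ¬ q ∣ N) {x y : ℕ} (h : hitTime q N x = hitTime q N y) :
    x ≡ y [MOD q] := by
  have hN : (N : ZMod q) ≠ 0 := by rwa [Ne, ZMod.natCast_eq_zero_iff]
  rwa [hitTime, hitTime, (ZMod.val_injective q).eq_iff, mul_left_inj' (inv_ne_zero hN), neg_inj,
    ZMod.natCast_eq_natCast_iff] at h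

theorem eq_of_hitTime_eq (hq2 : q ≠ 2) (hqN : ¬ q ∣ N) {a x y : ℕ} (hx : Odd x) (hy : Odd y)
    (hax : a ≤ x) (hay : a ≤ y) (hxa : x < a + 2 * q) (hya : y < a + 2 * q)
    (h : hitTime q N x = hitTime q N y) : x = y := by
  have hcop : Nat.Coprime 2 q :=
    (Nat.coprime_primes Nat.prime_two Fact.out).mpr (Ne.symm hq2)
  have h2 : x ≡ y [MOD 2] := by
    rw [Nat.odd_iff] at hx hy
    exact hx.trans hy.symm
  exact ((Nat.modEq_and_modEq_iff_modEq_mul hcop).mp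
    ⟨h2, modEq_of_hitTime_eq hqN h⟩).eq_of_le_of_lt_add hax hay hxa hya

end HitTime

section PrimeMul

variable {q N : ℕ}

lemma coprime_prime_mul_add_mul_iff (hq : q.Prime) (x t : ℕ) :
    (x + t * N).Coprime (q * N) ↔ ¬ q ∣ x + t * N ∧ x.Coprime N := by
  rw [Nat.coprime_prime_mul_iff hq, Nat.coprime_add_mul_right_left]

lemma coprimeCountIoo_prime_mul_add_mul (hq : q.Prime) (r g t : ℕ) :
    coprimeCountIoo (q * N) (r + t * N) (r + g + t * N) =
      #{x ∈ Ioo r (r + g) | x.Coprime N ∧ ¬ q ∣ x + t * N} := by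
  rw [coprimeCountIoo, ← map_add_right_Ioo, filter_map, card_map]
  congr 1
  refine filter_congr fun x _ ↦ ?_
  rw [Function.comp_apply, addRightEmbedding_apply, coprime_prime_mul_add_mul_iff hq, and_comm]

lemma IsDrivingTerm.of_prime_mul {g j r t : ℕ} (hq : q.Prime)
    (h : IsDrivingTerm (q * N) g j (r + t * N)) : r.Coprime N ∧ (r + g).Coprime N := by
  obtain ⟨h₁, h₂, -⟩ := h
  rw [add_right_comm] at h₂
  exact ⟨((coprime_prime_mul_add_mul_iff hq r t).mp h₁).2,
    ((coprime_prime_mul_add_mul_iff hq (r + g) t).mp h₂).2⟩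

lemma isDrivingTerm_prime_mul_iff [Fact q.Prime] (hqN : ¬ q ∣ N) {g j r t : ℕ}
    (hr : r.Coprime N) (hrg : (r + g).Coprime N) (hj : 1 ≤ j) (ht : t < q) :
    IsDrivingTerm (q * N) g j (r + t * N) ↔
      t ∉ ({r, r + g} : Finset ℕ).image (hitTime q N) ∧
        #{x ∈ {x ∈ Ioo r (r + g) | x.Coprime N} | hitTime q N x ≠ t} = j - 1 := by
  have hq : q.Prime := Fact.out
  have hcount : #{x ∈ Ioo r (r + g) | x.Coprime N ∧ ¬ q ∣ x + t * N} =
      #{x ∈ {x ∈ Ioo r (r + g) | x.Coprime N} | hitTime q N x ≠ t} := by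
    rw [filter_filter]
    refine congrArg card (filter_congr fun x _ ↦ ?_)
    rw [dvd_add_mul_iff_eq_hitTime hqN x ht, ne_comm]
  rw [IsDrivingTerm, add_right_comm r, coprime_prime_mul_add_mul_iff hq,
    coprime_prime_mul_add_mul_iff hq, coprimeCountIoo_prime_mul_add_mul hq, hcount,
    dvd_add_mul_iff_eq_hitTime hqN r ht, dvd_add_mul_iff_eq_hitTime hqN (r + g) ht]
  simp only [iff_true_intro hr, iff_true_intro hrg, and_true, image_insert, image_singleton,
    mem_insert, mem_singleton]
  omega

theorem card_filter_isDrivingTerm_prime_mul (hq : q.Prime) (hq2 : q ≠ 2) (hN : 2 ∣ N)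
    (hqN : ¬ q ∣ N) {g j : ℕ} (hg : 0 < g) (hgq : g < 2 * q) (hj : 1 ≤ j) (r : ℕ) :
    #{t ∈ range q | IsDrivingTerm (q * N) g j (r + t * N)} =
      (if IsDrivingTerm N g j r then q - (j + 1) else 0) +
        (if IsDrivingTerm N g (j + 1) r then j else 0) := by
  have := Fact.mk hq
  by_cases hends : r.Coprime N ∧ (r + g).Coprime N
  swap
  · have hnot : ∀ k, ¬ IsDrivingTerm N g k r := fun k h ↦ hends ⟨h.1, h.2.1⟩
    rw [if_neg (hnot _), if_neg (hnot _), card_eq_zero, filter_eq_empty_iff]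
    exact fun t _ h ↦ hends (h.of_prime_mul hq)
  obtain ⟨hr, hrg⟩ := hends
  set I := {x ∈ Ioo r (r + g) | x.Coprime N} with hI
  have hspan : ∀ x ∈ {r, r + g} ∪ I, r ≤ x ∧ x ≤ r + g ∧ x.Coprime N := by
    intro x hx
    simp only [hI, mem_union, mem_insert, mem_singleton, mem_filter, mem_Ioo] at hx
    rcases hx with (rfl | rfl) | ⟨⟨h₁, h₂⟩, h₃⟩
    exacts [⟨le_rfl, by omega, hr⟩, ⟨by omega, le_rfl, hrg⟩, ⟨h₁.le, h₂.le, h₃⟩]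
  have hinj : Set.InjOn (hitTime q N) ↑({r, r + g} ∪ I) := by
    intro x hx y hy hxy
    obtain ⟨hx₁, hx₂, hx₃⟩ := hspan x hx
    obtain ⟨hy₁, hy₂, hy₃⟩ := hspan y hy
    exact eq_of_hitTime_eq hq2 hqN (odd_of_coprime_of_two_dvd hN hx₃)
      (odd_of_coprime_of_two_dvd hN hy₃) hx₁ hy₁ (by omega) (by omega) hxy
  have hdisj : Disjoint ({r, r + g} : Finset ℕ) I := by
    simp [hI, disjoint_left]
  rw [filter_congr fun t ht ↦ isDrivingTerm_prime_mul_iff hqN hr hrg hj (mem_range.mp ht),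
    card_filter_notMem_image_card_filter_ne hdisj hinj (fun x _ ↦ mem_range.mpr (hitTime_lt x)),
    card_range, card_pair (by omega)]
  simp only [IsDrivingTerm, iff_true_intro hr, iff_true_intro hrg, true_and, coprimeCountIoo, ← hI]
  split_ifs <;> omega

theorem drivingTermCount_prime_mul (hq : q.Prime) (hq2 : q ≠ 2) (hN : 2 ∣ N) (hqN : ¬ q ∣ N)
    {g j : ℕ} (hg : 0 < g) (hgq : g < 2 * q) (hj : 1 ≤ j) :
    drivingTermCount (q * N) g j =
      (q - (j + 1)) * drivingTermCount N g j + j * drivingTermCount N g (j + 1) := by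
  rw [drivingTermCount, card_filter_Icc_mul_eq_sum,
    sum_congr rfl fun r _ ↦ card_filter_isDrivingTerm_prime_mul hq hq2 hN hqN hg hgq hj r,
    sum_add_distrib, ← sum_filter, ← sum_filter, sum_const, sum_const, smul_eq_mul, smul_eq_mul,
    drivingTermCount, drivingTermCount, mul_comm, mul_comm j]

end PrimeMul

lemma Nat.Prime.not_dvd_primorial {p q : ℕ} (hq : q.Prime) (hpq : p < q) : ¬ q ∣ primorial p :=
  fun hdvd ↦ absurd (le_of_mem_primesLE (primeFactors_primorial p ▸
    Nat.mem_primeFactors.mpr ⟨hq, hdvd, primorial_ne_zero p⟩)) (by omega)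

lemma primorial_eq_mul_of_consecutive {p q : ℕ} (hq : q.Prime) (hpq : p < q)
    (hnext : ∀ r, r.Prime → p < r → q ≤ r) : primorial q = q * primorial p := by
  obtain ⟨d, rfl⟩ := Nat.exists_eq_add_of_le hpq.le
  have hprimes : {k ∈ Ico (p + 1) (p + d + 1) | k.Prime} = {p + d} := by
    ext k
    simp only [mem_filter, mem_Ico, mem_singleton]
    constructor
    · rintro ⟨⟨h₁, h₂⟩, hk⟩
      have := hnext k hk (by omega)
      omega
    · rintro rfl
      exact ⟨⟨by omega, by omega⟩, hq⟩
  rw [primorial_add, hprimes, prod_singleton, mul_comm]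

theorem nCount_of_consecutive_primes {p q g j : ℕ} (hp : p.Prime) (hq : q.Prime) (hpq : p < q)
    (hnext : ∀ r, r.Prime → p < r → q ≤ r) (hg : 0 < g) (hgq : g < 2 * q) (hj : 1 ≤ j) :
    nCount q g j = (q - (j + 1)) * nCount p g j + j * nCount p g (j + 1) := by
  simp only [nCount_eq_drivingTermCount _ hg, primorial_eq_mul_of_consecutive hq hpq hnext]
  exact drivingTermCount_prime_mul hq (by have := hp.two_le; omega) (two_dvd_primorial hp.two_le)
    (hq.not_dvd_primorial hpq) hg hgq hj

theorem nCount_eq_zero {p g j : ℕ} (hp : 2 ≤ p) (hg : 0 < g) (hj : g / 2 < j) :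
    nCount p g j = 0 := by
  rw [nCount_eq_drivingTermCount _ hg]
  exact drivingTermCount_eq_zero (two_dvd_primorial hp) hg hj

theorem nCount_two_one_pos {p : ℕ} (hp : 2 ≤ p) : 0 < nCount p 2 1 := by
  rw [nCount_eq_drivingTermCount _ two_pos]
  exact drivingTermCount_two_one_pos (Nat.le_of_dvd (primorial_pos p) (two_dvd_primorial hp))

section Shift

lemma sum_Icc_add_one_eq_sum_Icc {M : Type*} [AddCommMonoid M] {J : ℕ} {b : ℕ → M}
    (h₁ : b 1 = 0) (htop : b (J + 1) = 0) :
    ∑ j ∈ Icc 1 J, b (j + 1) = ∑ j ∈ Icc 1 J, b j := by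
  have hshift : ∑ j ∈ Icc 1 J, b (j + 1) = ∑ j ∈ Ioc 1 (J + 1), b j := by
    rw [← Icc_add_one_left_eq_Ioc, ← map_add_right_Icc 1 J 1, sum_map]
    rfl
  rw [hshift, ← add_zero (∑ j ∈ Ioc 1 (J + 1), b j), ← h₁, sum_Ioc_add_eq_sum_Icc (by omega),
    sum_Icc_succ_top (by omega), htop, add_zero]

variable {J : ℕ} {P : ℝ} {a b : ℕ → ℝ}

theorem sum_Icc_eq_of_recurrence (htop : a (J + 1) = 0)
    (hb : ∀ j ∈ Icc 1 J, b j = (P - j - 1) * a j + j * a (j + 1)) :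
    ∑ j ∈ Icc 1 J, b j = (P - 2) * ∑ j ∈ Icc 1 J, a j := by
  have hshift : ∑ j ∈ Icc 1 J, (j : ℝ) * a (j + 1) = ∑ j ∈ Icc 1 J, ((j : ℝ) - 1) * a j := by
    simpa using sum_Icc_add_one_eq_sum_Icc (b := fun j ↦ ((j : ℝ) - 1) * a j) (by simp)
      (by simp [htop])
  rw [sum_congr rfl hb, sum_add_distrib, hshift, mul_sum, ← sum_add_distrib]
  exact sum_congr rfl fun j _ ↦ by ring

theorem sum_Icc_sub_one_mul_eq_of_recurrence (htop : a (J + 1) = 0)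
    (hb : ∀ j ∈ Icc 1 J, b j = (P - j - 1) * a j + j * a (j + 1)) :
    ∑ j ∈ Icc 1 J, ((j : ℝ) - 1) * b j = (P - 3) * ∑ j ∈ Icc 1 J, ((j : ℝ) - 1) * a j := by
  have hshift : ∑ j ∈ Icc 1 J, ((j : ℝ) - 1) * (j * a (j + 1)) =
      ∑ j ∈ Icc 1 J, ((j : ℝ) - 2) * (((j : ℝ) - 1) * a j) := by
    rw [← sum_Icc_add_one_eq_sum_Icc (b := fun j ↦ ((j : ℝ) - 2) * (((j : ℝ) - 1) * a j))
      (by simp) (by simp [htop])]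
    exact sum_congr rfl fun j _ ↦ by push_cast; ring
  have hexpand : ∀ j ∈ Icc 1 J, ((j : ℝ) - 1) * b j =
      ((j : ℝ) - 1) * ((P - j - 1) * a j) + ((j : ℝ) - 1) * (j * a (j + 1)) :=
    fun j hj ↦ by rw [hb j hj, mul_add]
  rw [sum_congr rfl hexpand, sum_add_distrib, hshift, mul_sum, ← sum_add_distrib]
  exact sum_congr rfl fun j _ ↦ by ring

end Shift

lemma exists_prev_prime {p₀ p : ℕ} (hp₀ : p₀.Prime) (hlt : p₀ < p) :
    ∃ p', p'.Prime ∧ p₀ ≤ p' ∧ p' < p ∧ ∀ r, r.Prime → p' < r → p ≤ r := by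
  refine ⟨Nat.findGreatest Nat.Prime (p - 1), Nat.findGreatest_spec (by omega) hp₀,
    Nat.le_findGreatest (by omega) hp₀,
    by have := Nat.findGreatest_le (P := Nat.Prime) (p - 1); omega,
    fun r hr hlt' ↦ ?_⟩
  by_contra! hrp
  exact Nat.findGreatest_is_greatest hlt' (by omega) hr

theorem eq_prod_mul_of_consecutive_primes {p₀ : ℕ} (hp₀ : p₀.Prime) {f c : ℕ → ℝ}
    (hstep : ∀ p' p, p'.Prime → p.Prime → p₀ ≤ p' → p' < p →
      (∀ r, r.Prime → p' < r → p ≤ r) → f p = c p * f p')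
    {p : ℕ} (hp : p.Prime) (hp₀p : p₀ ≤ p) :
    f p = (∏ k ∈ Ioc p₀ p with k.Prime, c k) * f p₀ := by
  induction p using Nat.strong_induction_on with
  | _ p ih =>
    rcases hp₀p.eq_or_lt with rfl | hlt
    · simp
    obtain ⟨p', hp', hp₀p', hp'p, hnext⟩ := exists_prev_prime hp₀ hlt
    have hprimes : {k ∈ Ioc p₀ p | k.Prime} = insert p {k ∈ Ioc p₀ p' | k.Prime} := by
      ext k
      simp only [mem_filter, mem_Ioc, mem_insert]
      constructor
      · rintro ⟨⟨h₁, h₂⟩, hk⟩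
        by_cases hkp' : k ≤ p'
        · exact Or.inr ⟨⟨h₁, hkp'⟩, hk⟩
        · exact Or.inl (le_antisymm h₂ (hnext k hk (by omega)))
      · rintro (rfl | ⟨⟨h₁, h₂⟩, hk⟩)
        exacts [⟨⟨hlt, le_rfl⟩, hp⟩, ⟨⟨h₁, by omega⟩, hk⟩]
    rw [hstep p' p hp' hp hp₀p' hp'p hnext, ih p' hp'p hp' hp₀p', hprimes,
      prod_insert (by simp; omega), mul_assoc]

open Filter Topology in
theorem tendsto_sum_inv_primes_Ioc (p₀ : ℕ) :
    Tendsto (fun p ↦ ∑ k ∈ Ioc p₀ p with k.Prime, (k : ℝ)⁻¹) atTop atTop := by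
  set f := Set.indicator {k : ℕ | k.Prime} (fun k : ℕ ↦ 1 / (k : ℝ))
  have hdiv : Tendsto (fun n ↦ ∑ k ∈ range n, f k) atTop atTop :=
    (not_summable_iff_tendsto_nat_atTop_of_nonneg fun k ↦
      Set.indicator_nonneg (fun k _ ↦ by positivity) k).mp not_summable_one_div_on_primes
  have hsplit : ∀ p, p₀ ≤ p → ∑ k ∈ Ioc p₀ p with k.Prime, (k : ℝ)⁻¹ =
      ∑ k ∈ range (p + 1), f k - ∑ k ∈ range (p₀ + 1), f k := by
    intro p hp
    rw [← sum_range_add_sum_Ico f (by omega : p₀ + 1 ≤ p + 1), Ico_add_one_add_one_eq_Ioc,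
      add_sub_cancel_left, sum_filter]
    exact sum_congr rfl fun k _ ↦ by simp [f, Set.indicator_apply]
  refine (tendsto_atTop_add_const_right _ (-∑ k ∈ range (p₀ + 1), f k)
    (hdiv.comp (tendsto_add_atTop_nat 1))).congr' ?_
  filter_upwards [eventually_ge_atTop p₀] with p hp
  rw [hsplit p hp, sub_eq_add_neg]
  rfl

open Filter Topology in
theorem tendsto_prod_primes_sub_three_div_sub_two {p₀ : ℕ} (hp₀ : 2 ≤ p₀) :
    Tendsto (fun p ↦ ∏ k ∈ Ioc p₀ p with k.Prime, ((k : ℝ) - 3) / ((k : ℝ) - 2)) atTop (𝓝 0) := by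
  have hfactor : ∀ p, ∀ k ∈ {k ∈ Ioc p₀ p | k.Prime},
      0 ≤ ((k : ℝ) - 3) / ((k : ℝ) - 2) ∧
        ((k : ℝ) - 3) / ((k : ℝ) - 2) ≤ Real.exp (-(k : ℝ)⁻¹) := by
    intro p k hk
    have hk3 : (3 : ℝ) ≤ k := by
      have := (mem_Ioc.mp (mem_filter.mp hk).1).1
      exact_mod_cast (by omega : 3 ≤ k)
    refine ⟨div_nonneg (by linarith) (by linarith), ?_⟩
    have hk2 : (k : ℝ) - 2 ≠ 0 := by linarith
    calc ((k : ℝ) - 3) / ((k : ℝ) - 2) = 1 - ((k : ℝ) - 2)⁻¹ := by field_simp; ring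
      _ ≤ Real.exp (-((k : ℝ) - 2)⁻¹) := Real.one_sub_le_exp_neg _
      _ ≤ Real.exp (-(k : ℝ)⁻¹) := by gcongr <;> linarith
  refine tendsto_of_tendsto_of_tendsto_of_le_of_le tendsto_const_nhds
    (Real.tendsto_exp_atBot.comp (tendsto_neg_atTop_atBot.comp (tendsto_sum_inv_primes_Ioc p₀)))
    (fun p ↦ prod_nonneg fun k hk ↦ (hfactor p k hk).1) (fun p ↦ ?_)
  simp only [Function.comp_apply, ← sum_neg_distrib, Real.exp_sum]
  exact prod_le_prod (fun k hk ↦ (hfactor p k hk).1) (fun k hk ↦ (hfactor p k hk).2)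

noncomputable def totalDrivingTerms (p g : ℕ) : ℝ := ∑ j ∈ Icc 1 (g / 2), (nCount p g j : ℝ)

noncomputable def weightedDrivingTerms (p g : ℕ) : ℝ :=
  ∑ j ∈ Icc 1 (g / 2), ((j : ℝ) - 1) * nCount p g j

lemma totalDrivingTerms_two (p : ℕ) : totalDrivingTerms p 2 = nCount p 2 1 := by
  simp [totalDrivingTerms]

lemma nCount_one_le_totalDrivingTerms {p g : ℕ} (hp : 2 ≤ p) (hg : 0 < g) :
    (nCount p g 1 : ℝ) ≤ totalDrivingTerms p g := by
  rcases Nat.lt_or_ge (g / 2) 1 with h | h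
  · rw [nCount_eq_zero hp hg h, Nat.cast_zero]
    exact sum_nonneg fun _ _ ↦ Nat.cast_nonneg _
  · exact single_le_sum (f := fun j ↦ (nCount p g j : ℝ)) (fun _ _ ↦ Nat.cast_nonneg _)
      (mem_Icc.mpr ⟨le_rfl, h⟩)

lemma totalDrivingTerms_sub_weightedDrivingTerms_le (p g : ℕ) :
    totalDrivingTerms p g - weightedDrivingTerms p g ≤ nCount p g 1 := by
  rw [totalDrivingTerms, weightedDrivingTerms, ← sum_sub_distrib]
  calc ∑ j ∈ Icc 1 (g / 2), ((nCount p g j : ℝ) - ((j : ℝ) - 1) * nCount p g j)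
      ≤ ∑ j ∈ Icc 1 (g / 2), if j = 1 then (nCount p g 1 : ℝ) else 0 := by
        refine sum_le_sum fun j hj ↦ ?_
        split_ifs with h
        · simp [h]
        · have hj2 : (2 : ℝ) ≤ j := by exact_mod_cast (by have := (mem_Icc.mp hj).1; omega)
          nlinarith [(Nat.cast_nonneg (nCount p g j) : (0 : ℝ) ≤ _)]
    _ ≤ nCount p g 1 := by
        rw [sum_ite_eq']
        split_ifs
        exacts [le_rfl, Nat.cast_nonneg _]

lemma cast_nCount_of_consecutive_primes {p' p g j : ℕ} (hp' : p'.Prime) (hp : p.Prime)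
    (hlt : p' < p) (hnext : ∀ r, r.Prime → p' < r → p ≤ r) (hg : 0 < g) (hgp : g / 2 + 1 < p)
    (hj : j ∈ Icc 1 (g / 2)) :
    (nCount p g j : ℝ) = (p - j - 1) * nCount p' g j + j * nCount p' g (j + 1) := by
  have hj := mem_Icc.mp hj
  rw [nCount_of_consecutive_primes hp' hp hlt hnext hg (by omega) hj.1]
  push_cast [Nat.cast_sub (by omega : j + 1 ≤ p)]
  ring

theorem drivingTerms_of_consecutive_primes {p' p g : ℕ} (hp' : p'.Prime) (hp : p.Prime)
    (hlt : p' < p) (hnext : ∀ r, r.Prime → p' < r → p ≤ r) (hg : 0 < g) (hgp : g / 2 + 1 < p) :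
    totalDrivingTerms p g = (p - 2) * totalDrivingTerms p' g ∧
      weightedDrivingTerms p g = (p - 3) * weightedDrivingTerms p' g := by
  have htop : (nCount p' g (g / 2 + 1) : ℝ) = 0 := by
    rw [nCount_eq_zero hp'.two_le hg (by omega), Nat.cast_zero]
  have hrec := fun j ↦ cast_nCount_of_consecutive_primes (j := j) hp' hp hlt hnext hg hgp
  exact ⟨sum_Icc_eq_of_recurrence htop hrec, sum_Icc_sub_one_mul_eq_of_recurrence htop hrec⟩

theorem drivingTerms_eq_prod_mul {g p₀ : ℕ} (hg : 0 < g) (hp₀ : p₀.Prime)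
    (hbig : ∀ r, r.Prime → p₀ < r → g / 2 + 1 < r) {p : ℕ} (hp : p.Prime) (hp₀p : p₀ ≤ p) :
    (nCount p 2 1 : ℝ) = (∏ k ∈ Ioc p₀ p with k.Prime, ((k : ℝ) - 2)) * nCount p₀ 2 1 ∧
      totalDrivingTerms p g =
        (∏ k ∈ Ioc p₀ p with k.Prime, ((k : ℝ) - 2)) * totalDrivingTerms p₀ g ∧
      weightedDrivingTerms p g =
        (∏ k ∈ Ioc p₀ p with k.Prime, ((k : ℝ) - 3)) * weightedDrivingTerms p₀ g := by
  have hstep : ∀ {g}, 0 < g → (∀ r, r.Prime → p₀ < r → g / 2 + 1 < r) →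
      ∀ p' p, p'.Prime → p.Prime → p₀ ≤ p' → p' < p → (∀ r, r.Prime → p' < r → p ≤ r) →
        totalDrivingTerms p g = (p - 2) * totalDrivingTerms p' g ∧
          weightedDrivingTerms p g = (p - 3) * weightedDrivingTerms p' g :=
    fun hg hbig p' p hp' hp hp₀p' hlt hnext ↦
      drivingTerms_of_consecutive_primes hp' hp hlt hnext hg (hbig p hp (hp₀p'.trans_lt hlt))
  have hbig₂ : ∀ r, r.Prime → p₀ < r → 2 / 2 + 1 < r := fun r _ hlt ↦ by
    have := hp₀.two_le
    omega
  refine ⟨?_, eq_prod_mul_of_consecutive_primes hp₀ (fun p' p hp' hp hp₀p' hlt hnext ↦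
      (hstep hg hbig p' p hp' hp hp₀p' hlt hnext).1) hp hp₀p,
    eq_prod_mul_of_consecutive_primes hp₀ (fun p' p hp' hp hp₀p' hlt hnext ↦
      (hstep hg hbig p' p hp' hp hp₀p' hlt hnext).2) hp hp₀p⟩
  simp only [← totalDrivingTerms_two]
  exact eq_prod_mul_of_consecutive_primes hp₀ (fun p' p hp' hp hp₀p' hlt hnext ↦
    (hstep two_pos hbig₂ p' p hp' hp hp₀p' hlt hnext).1) hp hp₀p

theorem nCount_ratio_mem_Icc {g p₀ : ℕ} (hg : 0 < g) (hp₀ : p₀.Prime)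
    (hbig : ∀ r, r.Prime → p₀ < r → g / 2 + 1 < r) {p : ℕ} (hp : p.Prime) (hp₀p : p₀ ≤ p) :
    (nCount p g 1 : ℝ) / nCount p 2 1 ∈ Set.Icc
      (totalDrivingTerms p₀ g / nCount p₀ 2 1 -
        (∏ k ∈ Ioc p₀ p with k.Prime, ((k : ℝ) - 3) / ((k : ℝ) - 2)) *
          (weightedDrivingTerms p₀ g / nCount p₀ 2 1))
      (totalDrivingTerms p₀ g / nCount p₀ 2 1) := by
  obtain ⟨hn, htot, hwt⟩ := drivingTerms_eq_prod_mul hg hp₀ hbig hp hp₀p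
  rw [Set.mem_Icc, prod_div_distrib]
  set W := ∏ k ∈ Ioc p₀ p with k.Prime, ((k : ℝ) - 2)
  have hW : 0 < W := prod_pos fun k hk ↦ by
    have := (mem_Ioc.mp (mem_filter.mp hk).1).1
    have := hp₀.two_le
    have : (3 : ℝ) ≤ k := by exact_mod_cast (by omega : 3 ≤ k)
    linarith
  have hn₀ : (0 : ℝ) < nCount p₀ 2 1 := by exact_mod_cast nCount_two_one_pos hp₀.two_le
  have hnp : (0 : ℝ) < nCount p 2 1 := by rw [hn]; positivity
  rw [le_div_iff₀ hnp, div_le_iff₀ hnp, hn]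
  constructor
  · calc _ = totalDrivingTerms p g - weightedDrivingTerms p g := by
          rw [htot, hwt]; field_simp
      _ ≤ _ := totalDrivingTerms_sub_weightedDrivingTerms_le p g
  · calc (nCount p g 1 : ℝ) ≤ totalDrivingTerms p g :=
          nCount_one_le_totalDrivingTerms hp.two_le hg
      _ = _ := by rw [htot]; field_simp

theorem ratio_tendsto_total_driving_terms_general (g : ℕ) (hg : 0 < g)
    (p0 q : ℕ) (hp0 : p0.Prime)
    (hmin : ∀ r : ℕ, r.Prime → p0 < r → q ≤ r) (hbig : g / 2 + 1 < q) :
    Filter.Tendsto (fun p : ℕ => (nCount p g 1 : ℝ) / (nCount p 2 1 : ℝ))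
      (Filter.atTop ⊓ Filter.principal {p : ℕ | p.Prime})
      (nhds ((∑ j ∈ Finset.Icc 1 (g / 2), (nCount p0 g j : ℝ)) / (nCount p0 2 1 : ℝ))) := by
  have hbounds := fun p (hp : p.Prime) (hp0p : p0 ≤ p) ↦
    nCount_ratio_mem_Icc hg hp0 (fun r hr hlt ↦ hbig.trans_le (hmin r hr hlt)) hp hp0p
  have hlower := ((tendsto_prod_primes_sub_three_div_sub_two hp0.two_le).mul_const
    (weightedDrivingTerms p0 g / nCount p0 2 1)).const_sub (totalDrivingTerms p0 g / nCount p0 2 1)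
  rw [zero_mul, sub_zero] at hlower
  have hev := Filter.eventually_inf_principal.mpr <| (Filter.eventually_ge_atTop p0).mono
    fun p hp0p (hp : p ∈ {p : ℕ | p.Prime}) ↦ hbounds p hp hp0p
  exact tendsto_of_tendsto_of_tendsto_of_le_of_le' (hlower.mono_left inf_le_left)
    tendsto_const_nhds (hev.mono fun _ h ↦ h.1) (hev.mono fun _ h ↦ h.2)

theorem ratio_tendsto_total_driving_terms (g : ℕ) (hg : 0 < g) (heven : Even g)
    (p0 q : ℕ) (hp0 : p0.Prime) (hq : q.Prime) (hlt : p0 < q)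
    (hmin : ∀ r : ℕ, r.Prime → p0 < r → q ≤ r) (hbig : g / 2 + 1 < q) :
    Filter.Tendsto (fun p : ℕ => (nCount p g 1 : ℝ) / (nCount p 2 1 : ℝ))
      (Filter.atTop ⊓ Filter.principal {p : ℕ | p.Prime})
      (nhds ((∑ j ∈ Finset.Icc 1 (g / 2), (nCount p0 g j : ℝ)) / (nCount p0 2 1 : ℝ))) :=
  ratio_tendsto_total_driving_terms_general g hg p0 q hp0 hmin hbig
end
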